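/- arXiv:0905.4518 — 3 statements merged into one kernel-verified Lean document; each statement's English description precedes it below -/
import Mathlib

section
/- Let R be a noetherian local domain with maximal ideal m_R and m_R-adic completion R̂, and let ν be a valuation of the quotient field of R whose valuation ring V dominates R. Then the prime ideal of infinite value Q(R̂) = {f ∈ R̂ : f satisfies (*)} is a prime ideal of R̂ (in particular it is a proper ideal closed under addition and under multiplication by elements of R̂, and f·g ∈ Q(R̂) implies f ∈ Q(R̂) or g ∈ Q(R̂)). -/
/-!
STATEMENT 6: The set `Q(R̂)` of elements of the `m_R`-adic completion `R̂` of a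
noetherian local domain `R` (dominated by the valuation ring of `ν`) satisfying
condition (*) is a prime ideal of `R̂`.

`R` is realized as a subring of a field `K` which is its quotient field and the
valuation is multiplicative: the additive condition `ν(f_n) ≥ l·ν(m_R)` reads
`ν(f_n) ≤ c ^ l`, `c` being the maximal multiplicative value of `ν` on `m_R`.
For a local ring the maximal ideal is `(⊥ : Ideal R).jacobson`.
-/

noncomputable section

variable {K : Type*} [Field K]

/-- `K` is the quotient field of the subring `R`. -/
def Subring.IsFractionFieldOf (R : Subring K) : Prop :=
  ∀ x : K, ∃ a b : R, (b : K) ≠ 0 ∧ x * (b : K) = (a : K)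

/-- The local subring `V` dominates the local subring `R`: `R ⊆ V` and `m_V ∩ R = m_R`. -/
def Subring.Dominates (V R : Subring K) : Prop :=
  IsLocalRing V ∧ IsLocalRing R ∧
    ∃ h : R ≤ V, ∀ r : R,
      (Subring.inclusion h r ∈ (⊥ : Ideal V).jacobson ↔ r ∈ (⊥ : Ideal R).jacobson)

/-- Convergence of a sequence of elements of `A` to an element of the `I`-adic completion. -/
def TendstoAdic {A : Type*} [CommRing A] (I : Ideal A) (fn : ℕ → A)
    (F : AdicCompletion I A) : Prop :=
  ∀ n : ℕ, ∃ N : ℕ, ∀ m ≥ N,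
    AdicCompletion.eval I A n (AdicCompletion.of I A (fn m)) = AdicCompletion.eval I A n F

variable {Γ : Type*} [LinearOrderedCommGroupWithZero Γ]

/-- `c = ν(m_R)`: the maximal multiplicative value of `ν` on `m_R` (minimal additive value). -/
def IsMaxIdealValue (R : Subring K) (ν : Valuation K Γ) (c : Γ) : Prop :=
  (∃ a : R, a ∈ (⊥ : Ideal R).jacobson ∧ ν (a : K) = c) ∧
    ∀ b : R, b ∈ (⊥ : Ideal R).jacobson → ν (b : K) ≤ c

/-- Condition (*): some Cauchy sequence in `R` converging to `F` has values eventually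
`≥ l·ν(m_R)` (multiplicatively `≤ c ^ l`) for every `l`. -/
def SatisfiesStar (R : Subring K) (ν : Valuation K Γ) (c : Γ)
    (F : AdicCompletion ((⊥ : Ideal R).jacobson) R) : Prop :=
  ∃ fn : ℕ → R, TendstoAdic _ fn F ∧
    ∀ l : ℕ, ∃ N : ℕ, ∀ n ≥ N, ν ((fn n : R) : K) ≤ c ^ l

/-!
As `ν ≥ 0` on `R` and `ν ≥ ν(m_R)` on `m_R`, we get `ν ≥ l·ν(m_R)` on `m_R^l`. So if a Cauchy
sequence `(f_n)` in `R` violates (*), then `ν(f_n) < l·ν(m_R)` for some `l` and infinitely many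
`n`, and since `ν(f_n - f_m) ≥ l·ν(m_R)` for large `n, m`, in fact `ν(f_n) < l·ν(m_R)` for all
large `n`. A product of two such sequences is again one, which gives primality. The same
ultrametric comparison shows that (*) only depends on the limit, and `1` violates (*) because
domination forces `ν(m_R) > 0`.
-/

open Filter

section AdicConvergence

variable {A : Type*} [CommRing A] {I : Ideal A}

theorem exists_tendstoAdic (F : AdicCompletion I A) : ∃ f : ℕ → A, TendstoAdic I f F := by
  choose f hf using fun n => Submodule.Quotient.mk_surjective (I ^ n • ⊤ : Submodule A A) (F.val n)
  refine ⟨f, fun n => ⟨n, fun m hm => ?_⟩⟩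
  rw [AdicCompletion.eval_of, AdicCompletion.eval_apply, Submodule.mkQ_apply,
    ← (show AdicCompletion.transitionMap I A hm (Submodule.Quotient.mk (f m)) =
      Submodule.Quotient.mk (f m) from AdicCompletion.transitionMap_ideal_mk I hm (f m)),
    hf m, F.property hm]

theorem tendstoAdic_const (a : A) : TendstoAdic I (fun _ => a) (AdicCompletion.of I A a) :=
  fun _ => ⟨0, fun _ _ => rfl⟩

theorem sub_mem_pow_of_eval_of_eq {n : ℕ} {a b : A}
    (h : AdicCompletion.eval I A n (AdicCompletion.of I A a) =
      AdicCompletion.eval I A n (AdicCompletion.of I A b)) : a - b ∈ I ^ n := by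
  rw [AdicCompletion.eval_of, AdicCompletion.eval_of, Submodule.mkQ_apply, Submodule.mkQ_apply,
    Submodule.Quotient.eq, smul_eq_mul, Ideal.mul_top] at h
  exact h

namespace TendstoAdic

variable {f g : ℕ → A} {F G : AdicCompletion I A}

theorem add (hf : TendstoAdic I f F) (hg : TendstoAdic I g G) :
    TendstoAdic I (f + g) (F + G) := by
  intro n
  obtain ⟨N, hN⟩ := hf n
  obtain ⟨M, hM⟩ := hg n
  refine ⟨max N M, fun k hk => ?_⟩
  rw [Pi.add_apply, map_add, map_add, map_add, hN k (le_of_max_le_left hk),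
    hM k (le_of_max_le_right hk)]

theorem mul (hf : TendstoAdic I f F) (hg : TendstoAdic I g G) :
    TendstoAdic I (f * g) (F * G) := by
  intro n
  obtain ⟨N, hN⟩ := hf n
  obtain ⟨M, hM⟩ := hg n
  refine ⟨max N M, fun k hk => ?_⟩
  have hfk := hN k (le_of_max_le_left hk)
  have hgk := hM k (le_of_max_le_right hk)
  rw [AdicCompletion.eval_apply, AdicCompletion.eval_apply] at hfk hgk ⊢
  change (AdicCompletion.of I A (f k) * AdicCompletion.of I A (g k)).val n = _
  rw [AdicCompletion.val_mul, AdicCompletion.val_mul, hfk, hgk]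

theorem sub_mem_pow (hf : TendstoAdic I f F) (hg : TendstoAdic I g F) (n : ℕ) :
    ∃ N, ∀ k ≥ N, ∀ m ≥ N, f k - g m ∈ I ^ n := by
  obtain ⟨N, hN⟩ := hf n
  obtain ⟨M, hM⟩ := hg n
  exact ⟨max N M, fun k hk m hm => sub_mem_pow_of_eval_of_eq <| by
    rw [hN k (le_of_max_le_left hk), hM m (le_of_max_le_right hm)]⟩

end TendstoAdic

end AdicConvergence

namespace Valuation

variable {A : Type*} [CommRing A] {I : Ideal A} (v : Valuation A Γ) (c : Γ)

/-- The additive condition `ν(f_n) ≥ l·ν(m_R)` is written multiplicatively as `v (f n) ≤ c ^ l`. -/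
def HasInfiniteValue (f : ℕ → A) : Prop :=
  ∀ l : ℕ, ∀ᶠ n in atTop, v (f n) ≤ c ^ l

variable {v c}

theorem map_le_pow_of_mem_pow (hv : ∀ a, v a ≤ 1) (hI : ∀ a ∈ I, v a ≤ c) :
    ∀ {n : ℕ} {x : A}, x ∈ I ^ n → v x ≤ c ^ n
  | 0, x, _ => by simpa using hv x
  | n + 1, x, hx => by
    rw [pow_succ] at hx
    refine Submodule.mul_induction_on hx (fun a ha b hb => ?_) (fun _ _ => v.map_add_le)
    rw [map_mul, pow_succ]
    exact mul_le_mul' (map_le_pow_of_mem_pow hv hI ha) (hI b hb)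

theorem hasInfiniteValue_zero : v.HasInfiniteValue c 0 :=
  fun _ => Eventually.of_forall fun _ => by simp

namespace HasInfiniteValue

variable {f g : ℕ → A}

theorem add (hf : v.HasInfiniteValue c f) (hg : v.HasInfiniteValue c g) :
    v.HasInfiniteValue c (f + g) :=
  fun l => (hf l).mp <| (hg l).mono fun _ hgn hfn => v.map_add_le hfn hgn

theorem mul_left (hv : ∀ a, v a ≤ 1) (g : ℕ → A) (hf : v.HasInfiniteValue c f) :
    v.HasInfiniteValue c (g * f) :=
  fun l => (hf l).mono fun n hfn => by
    simpa only [Pi.mul_apply, map_mul, one_mul] using mul_le_mul' (hv (g n)) hfn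

theorem of_tendstoAdic (hv : ∀ a, v a ≤ 1) (hI : ∀ a ∈ I, v a ≤ c) {F : AdicCompletion I A}
    (hf : TendstoAdic I f F) (hg : TendstoAdic I g F) (h : v.HasInfiniteValue c f) :
    v.HasInfiniteValue c g := by
  intro l
  obtain ⟨N, hN⟩ := hf.sub_mem_pow hg l
  filter_upwards [h l, eventually_ge_atTop N] with n hfn hn
  rw [← sub_sub_cancel (f n) (g n)]
  exact v.map_sub_le hfn (map_le_pow_of_mem_pow hv hI (hN n hn n hn))

end HasInfiniteValue

theorem exists_eventually_pow_lt_of_not_hasInfiniteValue (hv : ∀ a, v a ≤ 1)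
    (hI : ∀ a ∈ I, v a ≤ c) {f : ℕ → A} {F : AdicCompletion I A} (hf : TendstoAdic I f F)
    (h : ¬ v.HasInfiniteValue c f) : ∃ l : ℕ, ∀ᶠ n in atTop, c ^ l < v (f n) := by
  simp only [HasInfiniteValue, not_forall, not_eventually, not_le] at h
  obtain ⟨l, hl⟩ := h
  obtain ⟨N, hN⟩ := hf.sub_mem_pow hf l
  obtain ⟨m, hm, hlm⟩ := frequently_atTop.1 hl N
  refine ⟨l, eventually_atTop.2 ⟨N, fun n hn => ?_⟩⟩
  rwa [v.map_eq_of_sub_lt ((map_le_pow_of_mem_pow hv hI (hN n hn m hm)).trans_lt hlm)]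

theorem HasInfiniteValue.or_of_mul (hv : ∀ a, v a ≤ 1) (hI : ∀ a ∈ I, v a ≤ c) {f g : ℕ → A}
    {F G : AdicCompletion I A} (hf : TendstoAdic I f F) (hg : TendstoAdic I g G)
    (h : v.HasInfiniteValue c (f * g)) : v.HasInfiniteValue c f ∨ v.HasInfiniteValue c g := by
  by_contra! ⟨hnf, hng⟩
  obtain ⟨l, hl⟩ := exists_eventually_pow_lt_of_not_hasInfiniteValue hv hI hf hnf
  obtain ⟨m, hm⟩ := exists_eventually_pow_lt_of_not_hasInfiniteValue hv hI hg hng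
  obtain ⟨n, ⟨hfn, hgn⟩, hfgn⟩ := ((hl.and hm).and (h (l + m))).exists
  rw [Pi.mul_apply, map_mul, pow_add] at hfgn
  exact (mul_lt_mul'' hfn hgn zero_le zero_le).not_ge hfgn

variable (I v c)

/-- The ideal `Q(Â)` of the paper. -/
def infiniteValueIdeal (hv : ∀ a, v a ≤ 1) : Ideal (AdicCompletion I A) where
  carrier := {F | ∃ f, TendstoAdic I f F ∧ v.HasInfiniteValue c f}
  zero_mem' := ⟨0, by rw [← map_zero (AdicCompletion.of I A)]; exact tendstoAdic_const 0,
    hasInfiniteValue_zero⟩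
  add_mem' := fun ⟨f, hf, hfv⟩ ⟨g, hg, hgv⟩ => ⟨f + g, hf.add hg, hfv.add hgv⟩
  smul_mem' := fun G F ⟨f, hf, hfv⟩ => by
    obtain ⟨g, hg⟩ := exists_tendstoAdic G
    exact ⟨g * f, hg.mul hf, hfv.mul_left hv g⟩

variable {I v c}

theorem mem_infiniteValueIdeal {hv : ∀ a, v a ≤ 1} {F : AdicCompletion I A} :
    F ∈ infiniteValueIdeal I v c hv ↔ ∃ f, TendstoAdic I f F ∧ v.HasInfiniteValue c f :=
  Iff.rfl

theorem infiniteValueIdeal_isPrime (hv : ∀ a, v a ≤ 1) (hI : ∀ a ∈ I, v a ≤ c) (hc : c < 1) :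
    (infiniteValueIdeal I v c hv).IsPrime := by
  refine Ideal.isPrime_iff.2 ⟨fun htop => ?_, fun {F G} ⟨_, hh, hhv⟩ => ?_⟩
  · have hone : (1 : AdicCompletion I A) ∈ infiniteValueIdeal I v c hv := htop ▸ Submodule.mem_top
    obtain ⟨f, hf, hfv⟩ := mem_infiniteValueIdeal.1 hone
    obtain ⟨n, hn⟩ := ((hfv.of_tendstoAdic hv hI hf (tendstoAdic_const 1)) 1).exists
    rw [map_one, pow_one] at hn
    exact hn.not_gt hc
  · obtain ⟨f, hf⟩ := exists_tendstoAdic F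
    obtain ⟨g, hg⟩ := exists_tendstoAdic G
    exact (hhv.of_tendstoAdic hv hI hh (hf.mul hg)).or_of_mul hv hI hf hg |>.imp
      (⟨f, hf, ·⟩) (⟨g, hg, ·⟩)

end Valuation

theorem Subring.Dominates.le {V R : Subring K} (hdom : V.Dominates R) : R ≤ V :=
  hdom.2.2.1

theorem Subring.Dominates.map_lt_one {R : Subring K} {ν : Valuation K Γ}
    (hdom : ν.valuationSubring.toSubring.Dominates R) {a : R}
    (ha : a ∈ (⊥ : Ideal R).jacobson) : ν a < 1 := by
  obtain ⟨_, -, _, hmem⟩ := hdom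
  have := (hmem a).2 ha
  rw [IsLocalRing.jacobson_eq_maximalIdeal ⊥ bot_ne_top] at this
  exact (Valuation.mem_maximalIdeal_iff K ν).1 this

theorem prime_ideal_of_infinite_value_isPrime_general
    (R : Subring K)
    (ν : Valuation K Γ) (hdom : ν.valuationSubring.toSubring.Dominates R)
    (c : Γ) (hc : IsMaxIdealValue R ν c) :
    ∃ I : Ideal (AdicCompletion ((⊥ : Ideal R).jacobson) R),
      I.IsPrime ∧ ∀ F, F ∈ I ↔ SatisfiesStar R ν c F := by
  obtain ⟨⟨a, ha, rfl⟩, hI⟩ := hc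
  have hv : ∀ r : R, ν.comap R.subtype r ≤ 1 := fun r => hdom.le r.2
  refine ⟨Valuation.infiniteValueIdeal _ _ _ hv,
    Valuation.infiniteValueIdeal_isPrime hv hI (hdom.map_lt_one ha), fun F => ?_⟩
  simp only [Valuation.mem_infiniteValueIdeal, Valuation.HasInfiniteValue, eventually_atTop,
    SatisfiesStar]
  rfl

theorem prime_ideal_of_infinite_value_isPrime
    (R : Subring K) (hloc : IsLocalRing R) (hnoeth : IsNoetherianRing R)
    (hfrac : R.IsFractionFieldOf)
    (ν : Valuation K Γ) (hdom : ν.valuationSubring.toSubring.Dominates R)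
    (c : Γ) (hc : IsMaxIdealValue R ν c) :
    ∃ I : Ideal (AdicCompletion ((⊥ : Ideal R).jacobson) R),
      I.IsPrime ∧ ∀ F, F ∈ I ↔ SatisfiesStar R ν c F :=
  prime_ideal_of_infinite_value_isPrime_general R ν hdom c hc

end
end

section
/- Let k be a field, let φ(t), ψ(t) ∈ k[[t]] be power series of positive order with t, φ(t), ψ(t) algebraically independent over k, and let r ≥ 2 be an integer. Then the element f = (y − φ(x))^r + (z − ψ(x))^{r+1} is irreducible in the formal power series ring k[[x,y,z]]. -/
/-!
Setting `x = 0` maps `k⟦x, y, z⟧ → k⟦y, z⟧` preserving constant coefficients, so it reflects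
units and hence irreducibility; it sends `f` to `y ^ r + z ^ (r + 1)`. For coprime `m, n > 0`,
`y ^ m + z ^ n` is irreducible: with `y` of weight `n` and `z` of weight `m` it has weighted order
`m * n`, so in a factorization `a * b` into nonunits the orders of `a` and `b` are positive and
add up to `m * n`. The monomials `y ^ m` and `z ^ n` can only come from products of terms of
minimal weight, so the order of `a` is a multiple of both `n` and `m`, hence of `m * n`:
impossible.
-/

noncomputable section

variable {k : Type*} [Field k]

open Classical in
/-- The image of the one-variable power series `φ` under the continuous substitution
`t ↦ X i` into the power series ring in three variables: the coefficient of a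
monomial supported on `{i}` with exponent `n` is the `n`-th coefficient of `φ`. -/
def oneVar (i : Fin 3) (φ : PowerSeries k) : MvPowerSeries (Fin 3) k :=
  fun e => if e = Finsupp.single i (e i) then PowerSeries.coeff (e i) φ else 0

open Finsupp

namespace MvPowerSeries

section killCompl

variable {σ τ R : Type*} [CommRing R] (e : σ ↪ τ)

theorem constantCoeff_killCompl (p : MvPowerSeries τ R) :
    constantCoeff (killCompl e p) = constantCoeff p := by
  rw [← coeff_zero_eq_constantCoeff_apply, coeff_killCompl, embDomain_zero,
    coeff_zero_eq_constantCoeff_apply]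

instance isLocalHom_killCompl : IsLocalHom (killCompl (R := R) e) where
  map_nonunit p hp := by
    rw [isUnit_iff_constantCoeff, constantCoeff_killCompl] at hp
    exact isUnit_iff_constantCoeff.mpr hp

end killCompl

section weightedOrder

variable {σ R : Type*} [CommSemiring R] (w : σ → ℕ)

theorem one_le_weightedOrder_of_constantCoeff_eq_zero (hw : ∀ i, w i ≠ 0)
    {f : MvPowerSeries σ R} (hf : constantCoeff f = 0) : 1 ≤ f.weightedOrder w := by
  refine nat_le_weightedOrder w fun d hd => ?_
  have hd0 : d = 0 := by
    ext i
    by_contra hi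
    have := le_weight_of_ne_zero' w hi
    have := hw i
    omega
  rw [hd0, coeff_zero_eq_constantCoeff_apply, hf]

theorem exists_weightedOrder_eq_of_coeff_mul_single_ne_zero {a b : MvPowerSeries σ R}
    {i : σ} {c : ℕ} (hc : coeff (single i c) (a * b) ≠ 0)
    (hw : ((c * w i : ℕ) : ℕ∞) ≤ a.weightedOrder w + b.weightedOrder w) :
    ∃ j : ℕ, a.weightedOrder w = (j * w i : ℕ) := by
  classical
  rw [coeff_mul, antidiagonal_single, Finset.sum_map] at hc
  obtain ⟨⟨x, y⟩, hxy, hne⟩ := Finset.exists_ne_zero_of_sum_ne_zero hc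
  have ha : a.weightedOrder w ≤ (x * w i : ℕ) := by
    simpa [weight_single] using weightedOrder_le w (left_ne_zero_of_mul hne)
  have hb : b.weightedOrder w ≤ (y * w i : ℕ) := by
    simpa [weight_single] using weightedOrder_le w (right_ne_zero_of_mul hne)
  rw [Finset.HasAntidiagonal.mem_antidiagonal] at hxy
  obtain ⟨p, hp⟩ := ENat.ne_top_iff_exists.mp (ne_top_of_le_ne_top (ENat.natCast_ne_top _) ha)
  obtain ⟨q, hq⟩ := ENat.ne_top_iff_exists.mp (ne_top_of_le_ne_top (ENat.natCast_ne_top _) hb)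
  rw [← hp] at ha hw ⊢
  rw [← hq] at hb hw
  norm_cast at ha hb hw
  refine ⟨x, congrArg _ (le_antisymm ha ?_)⟩
  rw [← show x + y = c from hxy, add_mul] at hw
  omega

end weightedOrder

theorem weightedOrder_X_pow_add_X_pow {R : Type*} [CommSemiring R] [Nontrivial R]
    {m n : ℕ} (hm : m ≠ 0) :
    weightedOrder ![n, m] (X 0 ^ m + X 1 ^ n : MvPowerSeries (Fin 2) R) = (m * n : ℕ) := by
  have hcoeff : coeff (single 0 m) (X 0 ^ m + X 1 ^ n : MvPowerSeries (Fin 2) R) = 1 := by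
    simp [X_pow_eq, coeff_monomial, single_eq_single_iff, hm]
  refine le_antisymm ?_ ?_
  · have := weightedOrder_le ![n, m] (f := (X 0 ^ m + X 1 ^ n : MvPowerSeries (Fin 2) R))
      (d := single 0 m) (by rw [hcoeff]; exact one_ne_zero)
    rw [weight_single] at this
    simpa using this
  · refine le_trans ?_ (min_weightedOrder_le_add ![n, m])
    simp [X_pow_eq, weightedOrder_monomial_of_ne_zero, weight_single, mul_comm]

theorem irreducible_X_pow_add_X_pow {K : Type*} [Field K] {m n : ℕ} (hm : 0 < m) (hn : 0 < n)
    (hmn : m.Coprime n) : Irreducible (X 0 ^ m + X 1 ^ n : MvPowerSeries (Fin 2) K) := by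
  set w : Fin 2 → ℕ := ![n, m]
  have hw : ∀ i, w i ≠ 0 := by
    intro i
    fin_cases i <;> simp [w, hm.ne', hn.ne']
  refine ⟨fun hu => ?_, fun a b hab => ?_⟩
  · rw [isUnit_iff_constantCoeff] at hu
    simp [hm.ne', hn.ne'] at hu
  by_contra! hnonunit
  have hpos : ∀ f : MvPowerSeries (Fin 2) K, ¬IsUnit f → 1 ≤ f.weightedOrder w := fun f hf =>
    one_le_weightedOrder_of_constantCoeff_eq_zero w hw
      (by simpa [isUnit_iff_constantCoeff] using hf)
  have hord : a.weightedOrder w + b.weightedOrder w = (m * n : ℕ) := by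
    rw [← weightedOrder_mul, ← hab, weightedOrder_X_pow_add_X_pow hm.ne']
  have hcoeff_y : coeff (single 0 m) (a * b) ≠ 0 := by
    simp [← hab, X_pow_eq, coeff_monomial, single_eq_single_iff, hm.ne']
  have hcoeff_z : coeff (single 1 n) (a * b) ≠ 0 := by
    simp [← hab, X_pow_eq, coeff_monomial, single_eq_single_iff, hn.ne']
  obtain ⟨i, hi⟩ :=
    exists_weightedOrder_eq_of_coeff_mul_single_ne_zero w hcoeff_y (by simp [hord, w])
  obtain ⟨j, hj⟩ :=
    exists_weightedOrder_eq_of_coeff_mul_single_ne_zero w hcoeff_z (by simp [hord, w, mul_comm])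
  obtain ⟨q, hq⟩ := ENat.ne_top_iff_exists.mp
    (ne_top_of_le_ne_top (ENat.natCast_ne_top (m * n)) (hord ▸ le_add_self))
  have ha := hi ▸ hpos a hnonunit.1
  have hb := hq ▸ hpos b hnonunit.2
  rw [hi, ← hq] at hord
  rw [hi] at hj
  norm_cast at hord hj ha hb
  have hdvd : m * n ∣ i * n :=
    hmn.mul_dvd_of_dvd_of_dvd (hj ▸ dvd_mul_left m j) (dvd_mul_left n i)
  have := Nat.le_of_dvd ha hdvd
  omega

end MvPowerSeries

open MvPowerSeries

theorem killCompl_oneVar {σ : Type*} (e : σ ↪ Fin 3) {i : Fin 3} (hi : i ∉ Set.range e)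
    (φ : PowerSeries k) : killCompl e (oneVar i φ) = C (PowerSeries.constantCoeff φ) := by
  classical
  ext d
  have hdi : embDomain e d i = 0 := embDomain_of_notMem_range e d i hi
  rw [coeff_killCompl, coeff_C]
  change (if _ then _ else _) = _
  simp [hdi]

theorem irreducible_pow_add_pow_of_algebraicIndependent_general
    (φ ψ : PowerSeries k) (hφ : 0 < φ.order) (hψ : 0 < ψ.order)
    (r : ℕ) (hr : 2 ≤ r) :
    Irreducible ((MvPowerSeries.X 1 - oneVar 0 φ) ^ r
      + (MvPowerSeries.X 2 - oneVar 0 ψ) ^ (r + 1) : MvPowerSeries (Fin 3) k) := by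
  have hx : (0 : Fin 3) ∉ Set.range (Fin.succEmb 2) := by simp
  have hkill : killCompl (Fin.succEmb 2) ((X 1 - oneVar 0 φ) ^ r + (X 2 - oneVar 0 ψ) ^ (r + 1))
      = (X 0 ^ r + X 1 ^ (r + 1) : MvPowerSeries (Fin 2) k) := by
    simp only [map_add, map_pow, map_sub, killCompl_oneVar _ hx,
      PowerSeries.order_ne_zero_iff_constCoeff_eq_zero.mp hφ.ne',
      PowerSeries.order_ne_zero_iff_constCoeff_eq_zero.mp hψ.ne', map_zero, sub_zero]
    exact congrArg₂ (· ^ r + · ^ (r + 1)) (killCompl_X 0) (killCompl_X 1)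
  refine Irreducible.of_map (f := killCompl (R := k) (Fin.succEmb 2)) ?_
  rw [hkill]
  exact irreducible_X_pow_add_X_pow (by omega) (by omega) (by simp)

theorem irreducible_pow_add_pow_of_algebraicIndependent
    (φ ψ : PowerSeries k) (hφ : 0 < φ.order) (hψ : 0 < ψ.order)
    (hind : AlgebraicIndependent k ![PowerSeries.X, φ, ψ])
    (r : ℕ) (hr : 2 ≤ r) :
    Irreducible ((MvPowerSeries.X 1 - oneVar 0 φ) ^ r
      + (MvPowerSeries.X 2 - oneVar 0 ψ) ^ (r + 1) : MvPowerSeries (Fin 3) k) :=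
  irreducible_pow_add_pow_of_algebraicIndependent_general φ ψ hφ hψ r hr

end
end

section
/- Let k be a field, let R be a local domain which is essentially of finite type over k with quotient field K, and let V be a valuation ring of K dominating R. Suppose that for every prime ideal P of V, the quotient field of V/P is algebraic over the quotient field of R/(P ∩ R). Then contraction of primes is strictly order-preserving: for prime ideals P ⊊ P′ of V one has P ∩ R ⊊ P′ ∩ R; in particular the map P ↦ P ∩ R from prime ideals of V to prime ideals of R is injective. -/
/-!
STATEMENT 16: If `R` is a local domain essentially of finite type over a field `k`
with quotient field `K`, `V` a valuation ring of `K` dominating `R`, and if for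
every prime `P` of `V` the quotient field of `V/P` is algebraic over the quotient
field of `R/(P ∩ R)`, then contraction of primes `P ↦ P ∩ R` is strictly
order-preserving (and in particular injective).

`R` is realized as a subring of `K`.  "Algebraic" is expressed as: every element
of `Frac(V/P)` satisfies a nonzero polynomial with coefficients in `R/(P ∩ R)`
(equivalently, `Frac(V/P)` is algebraic over `Frac(R/(P ∩ R))`).
For a local ring the maximal ideal is `(⊥ : Ideal R).jacobson`.
-/

set_option maxHeartbeats 1000000
set_option synthInstance.maxHeartbeats 400000

noncomputable section

variable {K : Type*} [Field K]

/-- `R'` is essentially of finite type over `k`. -/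
def EssFiniteTypeOver (k R' : Subring K) : Prop :=
  k ≤ R' ∧ ∃ s : Finset K, (s : Set K) ⊆ (R' : Set K) ∧
    ∀ z : R', ∃ a b : K, a ∈ Subring.closure ((k : Set K) ∪ s) ∧
      b ∈ Subring.closure ((k : Set K) ∪ s) ∧
      (∃ binv : R', (binv : K) * b = 1) ∧ (z : K) * b = a

/-- The quotient field of `V/P` is algebraic over the quotient field of `R/(P ∩ R)`. -/
def AlgebraicContraction (R : Subring K) (V : ValuationSubring K)
    (h : R ≤ V.toSubring) (P : Ideal V) : Prop :=
  ∀ z : FractionRing (V ⧸ P),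
    ∃ q : Polynomial (R ⧸ Ideal.comap (Subring.inclusion h) P),
      q ≠ 0 ∧
      Polynomial.eval₂
        ((algebraMap (V ⧸ P) (FractionRing (V ⧸ P))).comp
          (Ideal.quotientMap P (Subring.inclusion h) le_rfl)) z q = 0

theorem contraction_strictMono_of_algebraic
    (k : Subfield K)
    (R : Subring K) (hloc : IsLocalRing R) (heft : EssFiniteTypeOver k.toSubring R)
    (hfrac : R.IsFractionFieldOf)
    (V : ValuationSubring K) (hdom : V.toSubring.Dominates R)
    (hRV : R ≤ V.toSubring)
    (halg : ∀ P : Ideal V, P.IsPrime → AlgebraicContraction R V hRV P) :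
    (∀ P P' : Ideal V, P.IsPrime → P'.IsPrime → P < P' →
      Ideal.comap (Subring.inclusion hRV) P < Ideal.comap (Subring.inclusion hRV) P') ∧
    (∀ P P' : Ideal V, P.IsPrime → P'.IsPrime →
      Ideal.comap (Subring.inclusion hRV) P = Ideal.comap (Subring.inclusion hRV) P' →
      P = P') := by
  have key : ∀ P P' : Ideal V, P.IsPrime → P'.IsPrime → P < P' →
      Ideal.comap (Subring.inclusion hRV) P = Ideal.comap (Subring.inclusion hRV) P' →
      False := by
    intro P P' hP hP' hlt hcomap
    haveI := hP
    obtain ⟨x, hxP', hxP⟩ := SetLike.exists_of_lt hlt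
    set θ := Ideal.quotientMap P (Subring.inclusion hRV) le_rfl with hθ
    set φ := algebraMap (V ⧸ P) (FractionRing (V ⧸ P)) with hφ
    have hφinj : Function.Injective φ := IsFractionRing.injective _ _
    have hz0 : φ (Ideal.Quotient.mk P x) ≠ 0 := by
      intro h
      apply hxP
      have := hφinj (h.trans (map_zero φ).symm)
      exact (Ideal.Quotient.eq_zero_iff_mem).mp this
    obtain ⟨q, hq0, hqz⟩ := halg P hP (φ (Ideal.Quotient.mk P x))
    set m := q.natTrailingDegree with hm
    obtain ⟨q₁, hq₁⟩ : (Polynomial.X : Polynomial _) ^ m ∣ q :=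
      Polynomial.X_pow_dvd_iff.mpr fun d hd =>
        Polynomial.coeff_eq_zero_of_lt_natTrailingDegree hd
    have hc0 : q₁.coeff 0 ≠ 0 := by
      have h1 : q.coeff m = q₁.coeff 0 := by
        conv_lhs => rw [hq₁]
        simpa using Polynomial.coeff_X_pow_mul q₁ m 0
      have ht : q.trailingCoeff ≠ 0 := Polynomial.trailingCoeff_nonzero_iff_nonzero.mpr hq0
      rw [Polynomial.trailingCoeff, ← hm, h1] at ht
      exact ht
    -- from q(z) = 0 and z ≠ 0 deduce q₁(z) = 0
    have hq₁z : Polynomial.eval₂ (φ.comp θ) (φ (Ideal.Quotient.mk P x)) q₁ = 0 := by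
      rw [hq₁, Polynomial.eval₂_mul, Polynomial.eval₂_X_pow] at hqz
      rcases mul_eq_zero.mp hqz with h | h
      · exact absurd h (pow_ne_zero _ hz0)
      · exact h
    -- push down to V ⧸ P
    have hVP : Polynomial.eval₂ θ (Ideal.Quotient.mk P x) q₁ = 0 := by
      apply hφinj
      rw [map_zero, Polynomial.hom_eval₂]
      exact hq₁z
    -- split off constant coefficient
    have hsplit : θ (q₁.coeff 0)
        + Ideal.Quotient.mk P x * Polynomial.eval₂ θ (Ideal.Quotient.mk P x) q₁.divX = 0 := by
      have := Polynomial.X_mul_divX_add q₁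
      calc θ (q₁.coeff 0)
          + Ideal.Quotient.mk P x * Polynomial.eval₂ θ (Ideal.Quotient.mk P x) q₁.divX
          = Polynomial.eval₂ θ (Ideal.Quotient.mk P x)
              (Polynomial.X * q₁.divX + Polynomial.C (q₁.coeff 0)) := by
            rw [Polynomial.eval₂_add, Polynomial.eval₂_mul, Polynomial.eval₂_X,
              Polynomial.eval₂_C, add_comm]
        _ = 0 := by rw [this]; exact hVP
    obtain ⟨r, hr⟩ := Ideal.Quotient.mk_surjective (q₁.coeff 0)
    obtain ⟨v, hv⟩ :=
      Ideal.Quotient.mk_surjective (Polynomial.eval₂ θ (Ideal.Quotient.mk P x) q₁.divX)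
    rw [← hr, ← hv, Ideal.quotientMap_mk, ← map_mul, ← map_add,
      Ideal.Quotient.eq_zero_iff_mem] at hsplit
    -- Subring.inclusion hRV r + x * v ∈ P ⊆ P', and x * v ∈ P', so inclusion r ∈ P'
    have hmem : Subring.inclusion hRV r ∈ P' := by
      have h1 : Subring.inclusion hRV r + x * v ∈ P' := hlt.le hsplit
      have h2 : x * v ∈ P' := P'.mul_mem_right v hxP'
      simpa using P'.sub_mem h1 h2
    have hrP : r ∈ Ideal.comap (Subring.inclusion hRV) P := by
      rw [hcomap]; exact hmem
    apply hc0
    rw [← hr, Ideal.Quotient.eq_zero_iff_mem]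
    exact hrP
  constructor
  · intro P P' hP hP' hlt
    refine lt_of_le_of_ne (Ideal.comap_mono hlt.le) fun h => key P P' hP hP' hlt h
  · intro P P' hP hP' h
    by_contra hne
    rcases ((ValuationRing.le_total_ideal (A := V)).total P P') with hle | hle
    · exact key P P' hP hP' (lt_of_le_of_ne hle hne) h
    · exact key P' P hP' hP (lt_of_le_of_ne hle (Ne.symm hne)) h.symm

end
end
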